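/- Let h be a nonzero polynomial over ℝ, let k₂ > 0 and k₁² < 3·k₂, and define f(x) = x + k₁·x² + k₂·x³. Then for every polynomial e over ℝ there exists a unique polynomial ẽ over ℝ such that applying f pointwise to the coefficients of h * ẽ reproduces the noiseless measurements n ↦ f((h * e).coeff n), namely ẽ = e. That is, under the cubic observation model with the stated coefficient condition, the full measurement process (convolution with the environment response followed by pointwise observation) admits exact restitution of the event. -/

import Mathlib

/-!
When `k₁² < 3 k₂` the cubic `f` is injective, so the pointwise observation recovers every
coefficient of `h * e`; since `ℝ[X]` has no zero divisors, `h ≠ 0` can then be cancelled.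
-/

open Polynomial Function

/-- The factor `1 + k₁ s + k₂ (a² + ab + b²)` of `f a - f b` is positive because, as a quadratic
in `s = a + b`, its discriminant is a negative multiple of `3 k₂ - k₁²`. -/
theorem injective_cubic_of_sq_lt {k₁ k₂ : ℝ} (hk : k₁ ^ 2 < 3 * k₂) :
    Injective fun x : ℝ => x + k₁ * x ^ 2 + k₂ * x ^ 3 := by
  intro a b hab
  have hk₂ : 0 < k₂ := by nlinarith [sq_nonneg k₁]
  have hpos : 0 < 1 + k₁ * (a + b) + k₂ * (a ^ 2 + a * b + b ^ 2) := by
    nlinarith [sq_nonneg (3 * k₂ * (a + b) + 2 * k₁), mul_nonneg hk₂.le (sq_nonneg (a - b))]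
  have hfac : (a - b) * (1 + k₁ * (a + b) + k₂ * (a ^ 2 + a * b + b ^ 2)) = 0 := by
    simp only at hab
    linear_combination hab
  exact sub_eq_zero.mp ((mul_eq_zero.mp hfac).resolve_right hpos.ne')

theorem Polynomial.injective_comp_coeff_mul_left {R S : Type*} [Ring R] [NoZeroDivisors R]
    {g : R → S} (hg : Injective g) {h : R[X]} (hh : h ≠ 0) :
    Injective fun p : R[X] => fun n => g ((h * p).coeff n) :=
  fun _ _ hpq => mul_left_cancel₀ hh (Polynomial.ext fun n => hg (congrFun hpq n))

theorem cubic_measurement_exact_restitution_general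
    (h : Polynomial ℝ) (hh : h ≠ 0)
    (k₁ k₂ : ℝ) (hk : k₁ ^ 2 < 3 * k₂)
    (f : ℝ → ℝ) (hf : ∀ x, f x = x + k₁ * x ^ 2 + k₂ * x ^ 3)
    (e : Polynomial ℝ) :
    (∃! e' : Polynomial ℝ,
        (fun n : ℕ => f ((h * e').coeff n)) = (fun n : ℕ => f ((h * e).coeff n))) ∧
      ∀ e' : Polynomial ℝ,
        (fun n : ℕ => f ((h * e').coeff n)) = (fun n : ℕ => f ((h * e).coeff n)) → e' = e := by
  have hf_inj : Injective f := by
    simpa only [← funext hf] using injective_cubic_of_sq_lt hk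
  have restitution := injective_comp_coeff_mul_left hf_inj hh
  exact ⟨⟨e, rfl, fun _ he' => restitution he'⟩, fun _ he' => restitution he'⟩

theorem cubic_measurement_exact_restitution
    (h : Polynomial ℝ) (hh : h ≠ 0)
    (k₁ k₂ : ℝ) (hk₂ : k₂ > 0) (hk : k₁ ^ 2 < 3 * k₂)
    (f : ℝ → ℝ) (hf : ∀ x, f x = x + k₁ * x ^ 2 + k₂ * x ^ 3)
    (e : Polynomial ℝ) :
    (∃! e' : Polynomial ℝ,
        (fun n : ℕ => f ((h * e').coeff n)) = (fun n : ℕ => f ((h * e).coeff n))) ∧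
      ∀ e' : Polynomial ℝ,
        (fun n : ℕ => f ((h * e').coeff n)) = (fun n : ℕ => f ((h * e).coeff n)) → e' = e :=
  cubic_measurement_exact_restitution_general h hh k₁ k₂ hk f hf e
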